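/- arXiv:1611.07415 — 9 statements merged into one kernel-verified Lean document; each statement's English description precedes it below -/
import Mathlib

section
/- Let a_1, ..., a_k be positive integers with gcd 1 and k ≥ 2. Every integer n ≥ (a_k - 1)·(a_1 + a_2 + ... + a_{k-1}) can be written as a nonnegative integral linear combination of a_1, ..., a_k. -/
lemma gcd_eq_int_sum {ι : Type*} [DecidableEq ι] (s : Finset ι) (f : ι → ℕ) :
    ∃ z : ι → ℤ, ((s.gcd f : ℕ) : ℤ) = ∑ i ∈ s, z i * (f i : ℤ) := by
  induction s using Finset.induction with
  | empty => exact ⟨0, by simp⟩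
  | @insert x s hx ih =>
    obtain ⟨z, hz⟩ := ih
    refine ⟨Function.update (fun i => Nat.gcdB (f x) (s.gcd f) * z i) x
      (Nat.gcdA (f x) (s.gcd f)), ?_⟩
    rw [Finset.gcd_insert, Finset.sum_insert hx, Function.update_self]
    have h := Nat.gcd_eq_gcd_ab (f x) (s.gcd f)
    have hgcd : (Nat.gcd (f x) (s.gcd f) : ℤ) = ((gcd (f x) (s.gcd f) : ℕ) : ℤ) := by
      norm_cast
    rw [← hgcd, h]
    rw [Finset.sum_congr rfl (fun i hi => by
      rw [Function.update_of_ne (by rintro rfl; exact hx hi)])]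
    have : ∑ i ∈ s, Nat.gcdB (f x) (s.gcd f) * z i * (f i : ℤ)
        = Nat.gcdB (f x) (s.gcd f) * ∑ i ∈ s, z i * (f i : ℤ) := by
      rw [Finset.mul_sum]; exact Finset.sum_congr rfl (fun i _ => by ring)
    rw [this, ← hz]
    ring

theorem stmt_1 (k : ℕ) (hk : 1 ≤ k) (a : Fin (k + 1) → ℕ)
    (hpos : ∀ i, 0 < a i) (hgcd : Finset.univ.gcd a = 1)
    (n : ℕ) (hn : (a (Fin.last k) - 1) * ∑ i : Fin k, a i.castSucc ≤ n) :
    ∃ r : Fin (k + 1) → ℕ, n = ∑ i, a i * r i := by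
  set m := a (Fin.last k) with hm
  have hm0 : 0 < m := hpos _
  obtain ⟨z, hz⟩ := gcd_eq_int_sum (Finset.univ : Finset (Fin (k+1))) a
  rw [hgcd] at hz
  -- n as integer combination
  have hnz : (n : ℤ) = ∑ i, (n * z i) * (a i : ℤ) := by
    have := congrArg (fun t => (n : ℤ) * t) hz
    simpa [Finset.mul_sum, mul_assoc, mul_comm, mul_left_comm] using this
  set c : Fin k → ℕ := fun i => ((n * z i.castSucc) % (m : ℤ)).toNat with hc
  have hcm : ∀ i, (c i : ℤ) = (n * z i.castSucc) % (m : ℤ) := fun i =>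
    Int.toNat_of_nonneg (Int.emod_nonneg _ (by exact_mod_cast hm0.ne'))
  have hclt : ∀ i, c i < m := fun i => by
    have h1 := Int.emod_lt_of_pos (n * z i.castSucc) (b := (m : ℤ)) (by exact_mod_cast hm0)
    have := hcm i
    omega
  set S : ℕ := ∑ i : Fin k, a i.castSucc * c i with hS
  have hSle : S ≤ n := by
    calc S ≤ ∑ i : Fin k, a i.castSucc * (m - 1) := by
            refine Finset.sum_le_sum fun i _ => Nat.mul_le_mul_left _ ?_
            have := hclt i; omega
      _ = (m - 1) * ∑ i : Fin k, a i.castSucc := by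
            rw [Finset.mul_sum]; exact Finset.sum_congr rfl fun i _ => by ring
      _ ≤ n := hn
  have hdvd : (m : ℤ) ∣ ((n : ℤ) - (S : ℤ)) := by
    have hsplit : (n : ℤ) = (∑ i : Fin k, (n * z i.castSucc) * (a i.castSucc : ℤ))
        + (n * z (Fin.last k)) * (m : ℤ) := by
      conv_lhs => rw [hnz, Fin.sum_univ_castSucc]
    have hScast : (S : ℤ) = ∑ i : Fin k, (a i.castSucc : ℤ) * (c i : ℤ) := by
      rw [hS]; push_cast; ring_nf
    rw [hsplit, hScast]
    have h1 : (m : ℤ) ∣ ∑ i : Fin k, ((n * z i.castSucc) * (a i.castSucc : ℤ)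
        - (a i.castSucc : ℤ) * (c i : ℤ)) := by
      refine Finset.dvd_sum fun i _ => ?_
      have : (n * z i.castSucc) * (a i.castSucc : ℤ) - (a i.castSucc : ℤ) * (c i : ℤ)
          = (a i.castSucc : ℤ) * ((n * z i.castSucc) - (n * z i.castSucc) % (m : ℤ)) := by
        rw [hcm i]; ring
      rw [this]
      exact Dvd.dvd.mul_left (Int.dvd_self_sub_of_emod_eq rfl) _
    have h2 : (∑ i : Fin k, (n * z i.castSucc) * (a i.castSucc : ℤ))
        + (n * z (Fin.last k)) * (m : ℤ) - ∑ i : Fin k, (a i.castSucc : ℤ) * (c i : ℤ)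
        = (∑ i : Fin k, ((n * z i.castSucc) * (a i.castSucc : ℤ)
            - (a i.castSucc : ℤ) * (c i : ℤ))) + (n * z (Fin.last k)) * (m : ℤ) := by
      rw [Finset.sum_sub_distrib]; ring
    rw [h2]
    exact dvd_add h1 ⟨n * z (Fin.last k), by ring⟩
  have hdvdn : m ∣ (n - S) := by
    have : ((n - S : ℕ) : ℤ) = (n : ℤ) - (S : ℤ) := by omega
    exact_mod_cast this ▸ hdvd
  obtain ⟨q, hq⟩ := hdvdn
  refine ⟨Fin.snoc c q, ?_⟩
  rw [Fin.sum_univ_castSucc]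
  simp only [Fin.snoc_castSucc, Fin.snoc_last]
  rw [← hS, ← hm, ← hq]
  omega
end

section
/- Let a and b be distinct, relatively prime integers greater than 1. The number of nonnegative integers not representable as ai + bj with i, j ∈ ℕ equals (a-1)(b-1)/2. -/
open scoped Classical

private lemma rep_uniq {a b : ℕ} (hb : 2 ≤ b) (hcop : Nat.Coprime a b)
    {i i' j j' : ℤ} (hi : 0 ≤ i) (hib : i < b) (hi' : 0 ≤ i') (hib' : i' < b)
    (h : (a:ℤ) * i + b * j = a * i' + b * j') : i = i' ∧ j = j' := by
  have hc : IsCoprime (b:ℤ) a := (Nat.isCoprime_iff_coprime.mpr hcop.symm)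
  have hd : (b:ℤ) ∣ a * (i - i') := ⟨j' - j, by linarith [h]⟩
  have hd2 : (b:ℤ) ∣ (i - i') := hc.dvd_of_dvd_mul_left hd
  have hii : i = i' := by
    rcases hd2 with ⟨k, hk⟩
    have hbpos : (0:ℤ) < b := by positivity
    have h1 : k < 1 := by nlinarith
    have h2 : (-1:ℤ) < k := by nlinarith
    have hk0 : k = 0 := by omega
    rw [hk0, mul_zero] at hk
    omega
  refine ⟨hii, ?_⟩
  subst hii
  have hb0 : (b:ℤ) ≠ 0 := by positivity
  exact mul_left_cancel₀ hb0 (by linarith : (b:ℤ) * j = b * j')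

private lemma rep_iff {a b : ℕ} (ha : 2 ≤ a) (hb : 2 ≤ b) (hcop : Nat.Coprime a b)
    {i j : ℤ} (hi : 0 ≤ i) (hib : i < b) :
    (∃ x y : ℕ, (a:ℤ) * i + b * j = a * x + b * y) ↔ 0 ≤ j := by
  constructor
  · rintro ⟨x, y, h⟩
    have hbpos : (0:ℤ) < b := by positivity
    set r : ℤ := (x:ℤ) % b with hr
    set q : ℤ := (x:ℤ) / b with hq
    have hx : (x:ℤ) = b * q + r := (Int.mul_ediv_add_emod (x:ℤ) b).symm
    have hr0 : 0 ≤ r := Int.emod_nonneg _ (ne_of_gt hbpos)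
    have hrb : r < b := Int.emod_lt_of_pos _ hbpos
    have hq0 : 0 ≤ q := Int.ediv_nonneg (by positivity) (le_of_lt hbpos)
    have h2 : (a:ℤ) * i + b * j = a * r + b * (y + a * q) := by
      rw [h, hx]; ring
    obtain ⟨-, hj⟩ := rep_uniq hb hcop hi hib hr0 hrb h2
    rw [hj]; positivity
  · intro hj
    exact ⟨i.toNat, j.toNat, by rw [Int.toNat_of_nonneg hi, Int.toNat_of_nonneg hj]⟩

private lemma exists_canon {a b : ℕ} (ha : 2 ≤ a) (hb : 2 ≤ b) (hcop : Nat.Coprime a b)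
    (n : ℤ) : ∃ i j : ℤ, 0 ≤ i ∧ i < b ∧ n = a * i + b * j := by
  obtain ⟨u, v, huv⟩ := (Nat.isCoprime_iff_coprime.mpr hcop : IsCoprime (a:ℤ) b)
  have hbpos : (0:ℤ) < b := by positivity
  refine ⟨(n * u) % b, n * v + a * ((n * u) / b), Int.emod_nonneg _ (ne_of_gt hbpos),
    Int.emod_lt_of_pos _ hbpos, ?_⟩
  have h := Int.mul_ediv_add_emod (n * u) b
  have h2 : n * (u * a + v * b) = n := by rw [huv, mul_one]
  nlinarith [h, h2]

private lemma symm_key {a b : ℕ} (ha : 2 ≤ a) (hb : 2 ≤ b) (hcop : Nat.Coprime a b)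
    (n : ℤ) :
    (∃ x y : ℕ, n = (a:ℤ) * x + b * y) ↔
      ¬ ∃ x y : ℕ, (a:ℤ) * b - a - b - n = a * x + b * y := by
  obtain ⟨i, j, hi, hib, hn⟩ := exists_canon ha hb hcop n
  have h1 : (∃ x y : ℕ, n = (a:ℤ) * x + b * y) ↔ 0 ≤ j := by
    rw [hn]; exact rep_iff ha hb hcop hi hib
  have hn2 : (a:ℤ) * b - a - b - n = a * (b - 1 - i) + b * (-1 - j) := by
    rw [hn]; ring
  have h2 : (∃ x y : ℕ, (a:ℤ) * b - a - b - n = a * x + b * y) ↔ 0 ≤ -1 - j := by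
    rw [hn2]; exact rep_iff ha hb hcop (by omega) (by omega)
  rw [h1, h2]; omega

set_option maxHeartbeats 1000000 in
theorem stmt_5 (a b : ℕ) (ha : 2 ≤ a) (hb : 2 ≤ b) (hab : a ≠ b) (hcop : Nat.Coprime a b) :
    {n : ℕ | ¬ ∃ i j : ℕ, n = a * i + b * j}.ncard = (a - 1) * (b - 1) / 2 := by
  set N : ℕ := (a - 1) * (b - 1) with hN
  have hN1 : 1 ≤ N := by
    rw [hN]; have : 1 ≤ a - 1 := by omega
    have : 1 ≤ b - 1 := by omega
    exact Nat.one_le_iff_ne_zero.mpr (by positivity)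
  have hNZ : (N : ℤ) = (a:ℤ) * b - a - b + 1 := by
    have h : (N : ℤ) = ((a:ℤ) - 1) * ((b:ℤ) - 1) := by
      rw [hN]
      push_cast [Nat.cast_sub (by omega : 1 ≤ a), Nat.cast_sub (by omega : 1 ≤ b)]
      ring
    rw [h]; ring
  have hcast : ∀ n : ℕ, (∃ i j : ℕ, n = a * i + b * j) ↔
      (∃ x y : ℕ, (n:ℤ) = (a:ℤ) * x + b * y) := by
    intro n
    constructor
    · rintro ⟨i, j, h⟩; exact ⟨i, j, by exact_mod_cast h⟩
    · rintro ⟨i, j, h⟩; exact ⟨i, j, by exact_mod_cast h⟩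
  have hbig : ∀ n : ℕ, N ≤ n → ∃ i j : ℕ, n = a * i + b * j := by
    intro n hn
    rw [hcast, symm_key ha hb hcop]
    rintro ⟨x, y, hxy⟩
    have h1 : (0:ℤ) ≤ (a:ℤ) * x + b * y := by positivity
    have h2 : (N:ℤ) ≤ n := by exact_mod_cast hn
    omega
  -- flip lemma
  have hflip : ∀ n : ℕ, n < N →
      ((¬ ∃ i j : ℕ, n = a * i + b * j) ↔ (∃ i j : ℕ, N - 1 - n = a * i + b * j)) := by
    intro n hn
    rw [hcast n, hcast (N - 1 - n)]
    have hc : ((N - 1 - n : ℕ) : ℤ) = (a:ℤ) * b - a - b - n := by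
      push_cast [Nat.cast_sub (by omega : 1 + n ≤ N)]
      omega
    rw [hc, symm_key ha hb hcop (n : ℤ)]
    exact not_not
  set T : Finset ℕ := (Finset.range N).filter (fun n => ¬ ∃ i j : ℕ, n = a * i + b * j) with hT
  set T' : Finset ℕ := (Finset.range N).filter (fun n => ∃ i j : ℕ, n = a * i + b * j) with hT'
  have hSeq : {n : ℕ | ¬ ∃ i j : ℕ, n = a * i + b * j} = ↑T := by
    ext n
    simp only [hT, Finset.coe_filter, Finset.mem_range, Set.mem_setOf_eq]
    constructor
    · intro h; exact ⟨by by_contra hc; exact h (hbig n (by omega)), h⟩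
    · rintro ⟨-, h⟩; exact h
  rw [hSeq, Set.ncard_coe_finset]
  have hcard : T.card = T'.card := by
    apply Finset.card_bij' (fun n _ => N - 1 - n) (fun n _ => N - 1 - n)
    · intro n hn
      simp only [hT, Finset.mem_filter, Finset.mem_range] at hn
      simp only [hT', Finset.mem_filter, Finset.mem_range]
      exact ⟨by omega, (hflip n hn.1).mp hn.2⟩
    · intro n hn
      simp only [hT', Finset.mem_filter, Finset.mem_range] at hn
      simp only [hT, Finset.mem_filter, Finset.mem_range]
      refine ⟨by omega, ?_⟩
      rw [hflip (N - 1 - n) (by omega)]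
      have : N - 1 - (N - 1 - n) = n := by omega
      rw [this]; exact hn.2
    · intro n hn
      simp only [hT, Finset.mem_filter, Finset.mem_range] at hn
      omega
    · intro n hn
      simp only [hT', Finset.mem_filter, Finset.mem_range] at hn
      omega
  have hsum : T'.card + T.card = N := by
    rw [hT, hT']
    rw [Finset.card_filter_add_card_filter_not (fun n => ∃ i j : ℕ, n = a * i + b * j)]
    exact Finset.card_range N
  have : T.card = N / 2 := by omega
  rw [this, hN]
end

section
/- Let a and b be distinct, relatively prime integers greater than 1, let S = {ai + bj : i, j ∈ ℕ}, and let F = ab - a - b. For every integer n with 0 ≤ n ≤ F, exactly one of n and F - n lies in S. In particular the numerical semigroup S is symmetric. -/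
/-!
Since `a` and `b` are coprime, every integer can be written `n = a * i + b * j` with `0 ≤ i < b`,
and `n` is a nonnegative combination of `a` and `b` exactly when `j ≥ 0`: any other
representation changes `i` by a multiple of `b`.
The representation of `a * b - a - b - n` is then `a * (b - 1 - i) + b * (-1 - j)`, and exactly
one of `j` and `-1 - j` is nonnegative.
-/

namespace Int

def nonnegCombinations (a b : ℤ) : Set ℤ :=
  {n | ∃ u v : ℤ, 0 ≤ u ∧ 0 ≤ v ∧ n = a * u + b * v}

theorem natCast_mem_nonnegCombinations_iff (a b m : ℕ) :
    (m : ℤ) ∈ nonnegCombinations a b ↔ ∃ i j : ℕ, m = a * i + b * j := by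
  constructor
  · rintro ⟨u, v, hu, hv, h⟩
    lift u to ℕ using hu
    lift v to ℕ using hv
    exact ⟨u, v, by exact_mod_cast h⟩
  · rintro ⟨i, j, h⟩
    exact ⟨i, j, i.cast_nonneg, j.cast_nonneg, by exact_mod_cast h⟩

theorem exists_eq_mul_add_mul_of_isCoprime {a b : ℤ} (hb : 0 < b) (hab : IsCoprime a b)
    (n : ℤ) : ∃ i j : ℤ, 0 ≤ i ∧ i < b ∧ n = a * i + b * j := by
  obtain ⟨x, y, hxy⟩ := hab
  refine ⟨n * x % b, n * y + a * (n * x / b), emod_nonneg _ hb.ne', emod_lt_of_pos _ hb, ?_⟩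
  linear_combination (-n) * hxy - a * emod_add_mul_ediv (n * x) b

theorem mem_nonnegCombinations_iff_nonneg {a b : ℤ} (ha : 0 < a) (hab : IsCoprime a b)
    {n i j : ℤ} (hi : 0 ≤ i) (hib : i < b) (hn : n = a * i + b * j) :
    n ∈ nonnegCombinations a b ↔ 0 ≤ j := by
  refine ⟨fun ⟨u, v, hu, hv, huv⟩ => ?_, fun hj => ⟨i, j, hi, hj, hn⟩⟩
  by_contra! hj
  have key : a * (i - u) = b * (v - j) := by linear_combination huv - hn
  have hdvd : b ∣ i - u := hab.symm.dvd_of_dvd_mul_left ⟨v - j, key⟩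
  have hpos : 0 < i - u := pos_of_mul_pos_right (key ▸ by nlinarith) ha.le
  linarith [le_of_dvd hpos hdvd]

theorem xor_mem_nonnegCombinations {a b : ℤ} (ha : 0 < a) (hb : 0 < b) (hab : IsCoprime a b)
    (n : ℤ) :
    Xor (n ∈ nonnegCombinations a b) (a * b - a - b - n ∈ nonnegCombinations a b) := by
  obtain ⟨i, j, hi, hib, hn⟩ := exists_eq_mul_add_mul_of_isCoprime hb hab n
  have hdual : a * b - a - b - n = a * (b - 1 - i) + b * (-1 - j) := by linear_combination -hn
  rw [mem_nonnegCombinations_iff_nonneg ha hab hi hib hn,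
    mem_nonnegCombinations_iff_nonneg ha hab (by linarith) (by linarith) hdual]
  exact xor_iff_iff_not.mpr (by omega)

end Int

theorem stmt_6_general (a b : ℕ) (ha : 2 ≤ a) (hb : 2 ≤ b) (hcop : Nat.Coprime a b)
    (n : ℕ) (hn : n ≤ a * b - a - b) :
    Xor' (∃ i j : ℕ, n = a * i + b * j)
      (∃ i j : ℕ, a * b - a - b - n = a * i + b * j) := by
  have hsum : a + b ≤ a * b := by nlinarith
  have hcast : ((a * b - a - b - n : ℕ) : ℤ) = (a : ℤ) * b - a - b - n := by
    rw [← Nat.cast_mul]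
    omega
  rw [← Int.natCast_mem_nonnegCombinations_iff, ← Int.natCast_mem_nonnegCombinations_iff, hcast]
  exact Int.xor_mem_nonnegCombinations (by omega) (by omega) (Nat.isCoprime_iff_coprime.mpr hcop) n

theorem stmt_6 (a b : ℕ) (ha : 2 ≤ a) (hb : 2 ≤ b) (hab : a ≠ b) (hcop : Nat.Coprime a b)
    (n : ℕ) (hn : n ≤ a * b - a - b) :
    Xor' (∃ i j : ℕ, n = a * i + b * j)
      (∃ i j : ℕ, a * b - a - b - n = a * i + b * j) :=
  stmt_6_general a b ha hb hcop n hn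
end

section
/- Let a and b be distinct, relatively prime integers greater than 1, let S = {ai + bj : i, j ∈ ℕ}, and let f_A(q) = Σ_{n ∉ S} q^n be the (polynomial) generating function of the gaps of S. Then (q^a - 1)(q^b - 1)((q - 1) f_A(q) + 1) = (q - 1)(q^{ab} - 1) as polynomials (say over ℚ or over any commutative ring). -/
/-!
Let `S = aℕ + bℕ`. Every element of `S` is either `a * i` with `i < b` or `b` plus an element
of `S`, and by coprimality not both: `a * i = b + a * i' + b * j` would force `b ∣ i - i'`.
So `S(q) = ∑_{i<b} q^(a i) + q^b S(q)`, i.e. `(1 - q^a)(1 - q^b) S(q) = 1 - q^(a b)` as power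
series, and the identity follows because the gaps have series `1 / (1 - q) - S(q)`.
-/

def twoGenSemigroup (a b : ℕ) : Set ℕ := {n | ∃ i j : ℕ, n = a * i + b * j}

section Semigroup

variable {a b : ℕ}

theorem twoGenSemigroup_eq_image_mul_union_image_add (hb : 0 < b) :
    twoGenSemigroup a b = (a * ·) '' Set.Iio b ∪ (b + ·) '' twoGenSemigroup a b := by
  ext n
  constructor
  · rintro ⟨i, j, rfl⟩
    have hmod : a * i + b * j = a * (i % b) + b * (j + a * (i / b)) := by
      nth_rw 1 [← Nat.div_add_mod i b]; ring
    rw [hmod]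
    generalize j + a * (i / b) = k
    rcases k with _ | k
    · exact .inl ⟨i % b, Nat.mod_lt _ hb, by simp⟩
    · exact .inr ⟨a * (i % b) + b * k, ⟨i % b, k, rfl⟩, by ring⟩
  · rintro (⟨i, -, rfl⟩ | ⟨m, ⟨i, j, rfl⟩, rfl⟩)
    · exact ⟨i, 0, by ring⟩
    · exact ⟨i, j + 1, by ring⟩

theorem disjoint_image_mul_image_add (hcop : a.Coprime b) :
    Disjoint ((a * ·) '' Set.Iio b) ((b + ·) '' twoGenSemigroup a b) := by
  rw [Set.disjoint_left]
  rintro _ ⟨i, hi, rfl⟩ ⟨_, ⟨i', j, rfl⟩, heq⟩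
  simp only [Set.mem_Iio] at hi heq
  have hlt : i' < i := Nat.lt_of_mul_lt_mul_left (a := a) (by omega)
  have hdvd : b ∣ a * (i - i') := ⟨j + 1, by rw [Nat.mul_sub, mul_add_one]; omega⟩
  have := Nat.le_of_dvd (by omega) (hcop.symm.dvd_of_dvd_mul_left hdvd)
  omega

theorem injOn_mul_Iio (hcop : a.Coprime b) : Set.InjOn (a * ·) (Set.Iio b) := by
  rcases Nat.eq_zero_or_pos a with rfl | ha
  · rw [Nat.coprime_zero_left] at hcop
    subst hcop
    intro i hi j hj _
    simp_all
  · exact (mul_right_injective₀ ha.ne').injOn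

end Semigroup

namespace PowerSeries

variable (R : Type*) [CommRing R]

noncomputable def indicatorSeries (s : Set ℕ) : R⟦X⟧ := mk (s.indicator 1)

variable {R}

theorem coeff_indicatorSeries (s : Set ℕ) (n : ℕ) :
    coeff n (indicatorSeries R s) = s.indicator 1 n :=
  coeff_mk _ _

theorem indicatorSeries_union {s t : Set ℕ} (h : Disjoint s t) :
    indicatorSeries R (s ∪ t) = indicatorSeries R s + indicatorSeries R t := by
  ext n
  simp [coeff_indicatorSeries, Set.indicator_union_of_disjoint h]

theorem indicatorSeries_compl (s : Set ℕ) :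
    indicatorSeries R sᶜ = mk 1 - indicatorSeries R s := by
  ext n
  simp [coeff_indicatorSeries, Set.indicator_compl]

theorem indicatorSeries_image_add_left (b : ℕ) (s : Set ℕ) :
    indicatorSeries R ((b + ·) '' s) = X ^ b * indicatorSeries R s := by
  ext n
  rw [coeff_X_pow_mul', coeff_indicatorSeries]
  split_ifs with hbn
  · obtain ⟨m, rfl⟩ := Nat.exists_eq_add_of_le hbn
    rw [Nat.add_sub_cancel_left, coeff_indicatorSeries,
      Set.indicator_image (add_right_injective b)]
    rfl
  · rw [Set.indicator_of_notMem]
    rintro ⟨m, -, hm⟩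
    simp only at hm
    omega

theorem indicatorSeries_finset (t : Finset ℕ) : indicatorSeries R t = ∑ n ∈ t, X ^ n := by
  ext n
  simp [coeff_indicatorSeries, map_sum, coeff_X_pow, Set.indicator]

theorem indicatorSeries_image_finset {f : ℕ → ℕ} {t : Finset ℕ} (hf : Set.InjOn f t) :
    indicatorSeries R (f '' t) = ∑ i ∈ t, X ^ f i := by
  rw [← Finset.coe_image, indicatorSeries_finset, Finset.sum_image hf]

theorem one_sub_X_mul_indicatorSeries_compl (s : Set ℕ) :
    (1 - X) * indicatorSeries R sᶜ = 1 - (1 - X) * indicatorSeries R s := by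
  rw [indicatorSeries_compl, mul_sub, mul_comm, mk_one_mul_one_sub_eq_one]

theorem one_sub_X_pow_mul_one_sub_X_pow_mul_indicatorSeries {a b : ℕ}
    (hb : 0 < b) (hcop : a.Coprime b) :
    (1 - X ^ a) * (1 - X ^ b) * indicatorSeries R (twoGenSemigroup a b) = 1 - X ^ (a * b) := by
  have hinj : Set.InjOn (a * ·) ↑(Finset.range b) := by
    rw [Finset.coe_range]
    exact injOn_mul_Iio hcop
  have hsplit := congrArg (indicatorSeries R)
    (twoGenSemigroup_eq_image_mul_union_image_add (a := a) hb)
  rw [indicatorSeries_union (disjoint_image_mul_image_add hcop), indicatorSeries_image_add_left,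
    ← Finset.coe_range, indicatorSeries_image_finset hinj] at hsplit
  have hgeom : (1 - X ^ b) * indicatorSeries R (twoGenSemigroup a b) =
      ∑ i ∈ Finset.range b, (X ^ a) ^ i := by
    simp_rw [← pow_mul]
    linear_combination hsplit
  rw [mul_assoc, hgeom, mul_neg_geom_sum, pow_mul]

end PowerSeries

open Polynomial

theorem stmt_7_general (a b : ℕ) (hb : 2 ≤ b) (hcop : Nat.Coprime a b)
    (hfin : {n : ℕ | ¬ ∃ i j : ℕ, n = a * i + b * j}.Finite) :
    (X ^ a - 1) * (X ^ b - 1) *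
        ((X - 1) * (∑ n ∈ hfin.toFinset, (X : ℚ[X]) ^ n) + 1) =
      (X - 1) * (X ^ (a * b) - 1) := by
  apply Polynomial.coe_injective ℚ
  have hgaps : ((∑ n ∈ hfin.toFinset, (X : ℚ[X]) ^ n : ℚ[X]) : PowerSeries ℚ) =
      PowerSeries.indicatorSeries ℚ (twoGenSemigroup a b)ᶜ := by
    rw [← coeToPowerSeries.ringHom_apply, map_sum]
    simp only [map_pow, coeToPowerSeries.ringHom_apply, coe_X]
    rw [← PowerSeries.indicatorSeries_finset, hfin.coe_toFinset]
    rfl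
  push_cast
  rw [hgaps]
  linear_combination (-(1 - PowerSeries.X ^ a) * (1 - PowerSeries.X ^ b)) *
      PowerSeries.one_sub_X_mul_indicatorSeries_compl (R := ℚ) (twoGenSemigroup a b) +
    (1 - PowerSeries.X) *
      PowerSeries.one_sub_X_pow_mul_one_sub_X_pow_mul_indicatorSeries (R := ℚ) (by omega) hcop

theorem stmt_7 (a b : ℕ) (ha : 2 ≤ a) (hb : 2 ≤ b) (hab : a ≠ b) (hcop : Nat.Coprime a b)
    (hfin : {n : ℕ | ¬ ∃ i j : ℕ, n = a * i + b * j}.Finite) :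
    (X ^ a - 1) * (X ^ b - 1) *
        ((X - 1) * (∑ n ∈ hfin.toFinset, (X : ℚ[X]) ^ n) + 1) =
      (X - 1) * (X ^ (a * b) - 1) :=
  stmt_7_general a b hb hcop hfin
end

section
/- Let a and b be distinct, relatively prime positive integers, let E be a field, and let Φ : E[x,y] → E[t] be the ring homomorphism determined by Φ(x) = t^a and Φ(y) = t^b. Then the kernel of Φ is the principal ideal generated by x^b - y^a. -/
/-!
Identify `E[x,y]` with `E[y][x]`: then `Φ` is evaluation at `x = t^a` after expanding the
coefficients by `y ↦ t^b`. As `x^b - y^a` is monic in `x`, every element of the kernel is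
congruent to a remainder `r = ∑_{i<b} r_i(y) x^i` that still lies in the kernel. The exponents
of `t` occurring in `r_i(t^b) t^{ai}` are all `≡ a i (mod b)`, and these residues are pairwise
distinct because `gcd(a, b) = 1`; so no cancellation between different `i` is possible and
`r = 0`.
-/

open Polynomial

theorem Nat.not_modEq_mul_add_mul {a b i i' : ℕ} (hcop : a.Coprime b) (hi : i < b) (hi' : i' < b)
    (hne : i' ≠ i) (j : ℕ) : ¬ a * i + b * j ≡ a * i' [MOD b] := by
  intro h
  have hmod : a * i ≡ a * i' [MOD b] := by
    simpa only [Nat.ModEq, Nat.add_mul_mod_self_left] using h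
  exact hne ((Nat.ModEq.cancel_left_of_coprime hcop.symm hmod).eq_of_lt_of_lt hi hi').symm

namespace Polynomial

theorem ker_eq_span_of_monic {R S F : Type*} [CommRing R] [Ring S]
    [FunLike F R[X] S] [RingHomClass F R[X] S] (φ : F) {p : R[X]} (hp : p.Monic) (hφp : φ p = 0)
    (hinj : ∀ r : R[X], r.degree < p.degree → φ r = 0 → r = 0) :
    RingHom.ker φ = Ideal.span {p} := by
  nontriviality R
  refine le_antisymm (fun f hf => ?_) ?_
  · rw [Ideal.mem_span_singleton, ← modByMonic_eq_zero_iff_dvd hp]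
    refine hinj _ (degree_modByMonic_lt f hp) ?_
    rw [modByMonic_eq_sub_mul_div, map_sub, map_mul, hφp, zero_mul, sub_zero]
    exact hf
  · rw [Ideal.span_le, Set.singleton_subset_iff]
    exact hφp

section CommSemiring
variable {R : Type*} [CommSemiring R] {b : ℕ}

theorem coeff_expand_mul_X_pow_of_not_modEq (hb : 0 < b) (q : R[X]) {k n : ℕ}
    (h : ¬ n ≡ k [MOD b]) : (expand R b q * X ^ k).coeff n = 0 := by
  rw [coeff_mul_X_pow', coeff_expand hb]
  split_ifs with hkn hdvd
  · exact absurd ((Nat.modEq_iff_dvd' hkn).2 hdvd).symm h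
  all_goals rfl

theorem coeff_expand_mul_X_pow_add_mul (hb : 0 < b) (q : R[X]) (k j : ℕ) :
    (expand R b q * X ^ k).coeff (k + b * j) = q.coeff j := by
  rw [add_comm, coeff_mul_X_pow, coeff_expand_mul' hb]

theorem eq_zero_of_aevalTower_expand_eq_zero {a : ℕ} (hb : 0 < b) (hcop : a.Coprime b)
    {r : R[X][X]} (hdeg : r.degree < b) (h : aevalTower (expand R b) (X ^ a) r = 0) : r = 0 := by
  by_contra hr
  have hsum : aevalTower (expand R b) (X ^ a) r =
      ∑ i ∈ Finset.range b, expand R b (r.coeff i) * X ^ (a * i) := by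
    simp only [pow_mul]
    exact eval₂_eq_sum_range' _ ((natDegree_lt_iff_degree_lt hr).2 hdeg) _
  refine hr (ext fun i => ext fun j => ?_)
  rw [coeff_zero, coeff_zero]
  obtain hi | hi := lt_or_ge i b
  · have hcoeff := congrArg (coeff · (a * i + b * j)) (hsum.symm.trans h)
    simp only [finsetSum_coeff, coeff_zero] at hcoeff
    rwa [Finset.sum_eq_single_of_mem i (Finset.mem_range.2 hi),
      coeff_expand_mul_X_pow_add_mul hb] at hcoeff
    exact fun i' hi' hne => coeff_expand_mul_X_pow_of_not_modEq hb _
      (Nat.not_modEq_mul_add_mul hcop hi (Finset.mem_range.1 hi') hne j)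
  · rw [coeff_eq_zero_of_degree_lt (hdeg.trans_le (by exact_mod_cast hi)), coeff_zero]

end CommSemiring

theorem ker_aevalTower_expand {R : Type*} [CommRing R] {a b : ℕ} (hb : 0 < b)
    (hcop : a.Coprime b) :
    RingHom.ker (aevalTower (expand R b) (X ^ a)) = Ideal.span {X ^ b - C (X ^ a)} := by
  nontriviality R
  refine ker_eq_span_of_monic _ (monic_X_pow_sub_C _ hb.ne') ?_ fun r hr =>
    eq_zero_of_aevalTower_expand_eq_zero hb hcop (by rwa [degree_X_pow_sub_C hb] at hr)
  rw [map_sub, map_pow, aevalTower_X, aevalTower_C, map_pow, expand_X, ← pow_mul, ← pow_mul,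
    mul_comm, sub_self]

end Polynomial

namespace MvPolynomial

variable (R : Type*) [CommSemiring R]

noncomputable def finTwoAlgEquiv : MvPolynomial (Fin 2) R ≃ₐ[R] R[X][X] :=
  (finSuccEquiv R 1).trans (Polynomial.mapAlgEquiv (uniqueAlgEquiv R (Fin 1)))

@[simp]
theorem finTwoAlgEquiv_X_zero : finTwoAlgEquiv R (X 0) = Polynomial.X := by
  rw [finTwoAlgEquiv, AlgEquiv.trans_apply, finSuccEquiv_X_zero, Polynomial.coe_mapAlgEquiv,
    Polynomial.map_X]

@[simp]
theorem finTwoAlgEquiv_X_one : finTwoAlgEquiv R (X 1) = Polynomial.C Polynomial.X := by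
  rw [finTwoAlgEquiv, AlgEquiv.trans_apply, show (1 : Fin 2) = Fin.succ 0 from rfl,
    finSuccEquiv_X_succ, Polynomial.coe_mapAlgEquiv,
    Polynomial.map_C, RingHom.coe_coe, uniqueAlgEquiv_apply, eval₂_X]

end MvPolynomial

theorem stmt_8_general (a b : ℕ) (hb : 0 < b) (hcop : Nat.Coprime a b)
    (E : Type*) [Field E] :
    RingHom.ker (MvPolynomial.aeval
        (fun i : Fin 2 => if i = 0 then (Polynomial.X : Polynomial E) ^ a
          else Polynomial.X ^ b) : MvPolynomial (Fin 2) E →ₐ[E] Polynomial E) =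
      Ideal.span {MvPolynomial.X 0 ^ b - MvPolynomial.X 1 ^ a} := by
  set e := MvPolynomial.finTwoAlgEquiv E
  have hΦ : MvPolynomial.aeval (fun i : Fin 2 => if i = 0 then (X : E[X]) ^ a else X ^ b) =
      (aevalTower (expand E b) (X ^ a)).comp (e : MvPolynomial (Fin 2) E →ₐ[E] E[X][X]) := by
    refine MvPolynomial.algHom_ext fun i => ?_
    fin_cases i <;> simp [e]
  have hp : e.symm (X ^ b - C (X ^ a)) = MvPolynomial.X 0 ^ b - MvPolynomial.X 1 ^ a := by
    rw [AlgEquiv.symm_apply_eq]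
    simp [e]
  rw [hΦ, ← AlgHom.comap_ker, ker_aevalTower_expand hb hcop]
  change Ideal.comap e.toRingEquiv _ = _
  rw [← Ideal.map_symm, Ideal.map_span, Set.image_singleton, ← hp]
  rfl

theorem stmt_8 (a b : ℕ) (ha : 0 < a) (hb : 0 < b) (hab : a ≠ b) (hcop : Nat.Coprime a b)
    (E : Type*) [Field E] :
    RingHom.ker (MvPolynomial.aeval
        (fun i : Fin 2 => if i = 0 then (Polynomial.X : Polynomial E) ^ a
          else Polynomial.X ^ b) : MvPolynomial (Fin 2) E →ₐ[E] Polynomial E) =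
      Ideal.span {MvPolynomial.X 0 ^ b - MvPolynomial.X 1 ^ a} :=
  stmt_8_general a b hb hcop E
end

section
/- Let a and b be distinct, relatively prime integers greater than 1, let S = {ai + bj : i, j ∈ ℕ}, and let p_{a,b}(n) = |{(i,j) ∈ ℕ² : ai + bj = n}|. Then for every n ∈ ℕ, p_{a,b}(n) equals (1 if n ∈ S else 0) plus p_{a,b}(n - ab) (where p_{a,b}(m) = 0 for m < 0). -/
open scoped Classical
theorem stmt_11 (a b : ℕ) (ha : 2 ≤ a) (hb : 2 ≤ b) (hab : a ≠ b) (hcop : Nat.Coprime a b)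
    (n : ℕ) :
    {p : ℕ × ℕ | a * p.1 + b * p.2 = n}.ncard =
      (if ∃ i j : ℕ, n = a * i + b * j then 1 else 0) +
        (if a * b ≤ n then {p : ℕ × ℕ | a * p.1 + b * p.2 = n - a * b}.ncard else 0) := by
  have hb0 : 0 < b := by omega
  haveI : NeZero b := ⟨by omega⟩
  have hfin : ∀ m : ℕ, ({p : ℕ × ℕ | a * p.1 + b * p.2 = m}).Finite := by
    intro m
    apply Set.Finite.subset (Set.finite_Iic (m, m))
    rintro ⟨i, j⟩ h
    simp only [Set.mem_setOf_eq] at h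
    have hi : i ≤ a * i := Nat.le_mul_of_pos_left _ (by omega)
    have hj : j ≤ b * j := Nat.le_mul_of_pos_left _ (by omega)
    exact Set.mem_Iic.mpr (Prod.mk_le_mk.mpr ⟨by omega, by omega⟩)
  -- uniqueness of representations with small first coordinate
  have huniq : ∀ i j i' j' : ℕ, i < b → i' < b →
      a * i + b * j = n → a * i' + b * j' = n → i = i' ∧ j = j' := by
    intro i j i' j' hi hi' h h'
    have hmod : a * i % b = a * i' % b := by
      have := congrArg (· % b) (h.trans h'.symm)
      simpa [Nat.add_mul_mod_self_left] using this
    have hmod' : a * i ≡ a * i' [MOD b] := hmod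
    have hii : i % b = i' % b :=
      Nat.ModEq.cancel_left_of_coprime hcop.symm hmod'
    rw [Nat.mod_eq_of_lt hi, Nat.mod_eq_of_lt hi'] at hii
    subst hii
    have hbj : b * j = b * j' := by omega
    exact ⟨rfl, Nat.eq_of_mul_eq_mul_left hb0 hbj⟩
  by_cases habn : a * b ≤ n
  · -- construct the canonical small representation
    set x : ZMod b := (n : ZMod b) * (a : ZMod b)⁻¹ with hx
    set i₀ : ℕ := x.val with hi₀def
    have hi₀ : i₀ < b := ZMod.val_lt x
    have hmm : ((a * i₀ : ℕ) : ZMod b) = (n : ZMod b) := by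
      push_cast
      rw [hi₀def, ZMod.natCast_val, ZMod.cast_id, hx]
      calc (a : ZMod b) * ((n : ZMod b) * (a : ZMod b)⁻¹)
          = (n : ZMod b) * ((a : ZMod b) * (a : ZMod b)⁻¹) := by ring
        _ = (n : ZMod b) := by rw [ZMod.coe_mul_inv_eq_one a hcop, mul_one]
    have hm : a * i₀ ≡ n [MOD b] := (ZMod.natCast_eq_natCast_iff _ _ _).mp hmm
    have hle : a * i₀ ≤ n := by
      have h1 : a * i₀ ≤ a * (b - 1) := Nat.mul_le_mul_left a (by omega)
      have h2 : a * (b - 1) + a = a * b := by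
        rw [← Nat.mul_succ, Nat.succ_eq_add_one, Nat.sub_add_cancel (by omega)]
      omega
    have hdvd : b ∣ n - a * i₀ := (Nat.modEq_iff_dvd' hle).mp hm
    set j₀ : ℕ := (n - a * i₀) / b with hj₀def
    have hp₀ : a * i₀ + b * j₀ = n := by
      have : b * j₀ = n - a * i₀ := Nat.mul_div_cancel' hdvd
      omega
    have hins : {p : ℕ × ℕ | a * p.1 + b * p.2 = n} =
        insert (i₀, j₀) ((fun p : ℕ × ℕ => (p.1 + b, p.2)) ''
          {p : ℕ × ℕ | a * p.1 + b * p.2 = n - a * b}) := by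
      ext ⟨i, j⟩
      simp only [Set.mem_setOf_eq, Set.mem_insert_iff, Set.mem_image, Prod.mk.injEq,
        Prod.exists]
      constructor
      · intro h
        by_cases hib : i < b
        · left
          obtain ⟨h1, h2⟩ := huniq i j i₀ j₀ hib hi₀ h hp₀
          exact ⟨h1, h2⟩
        · right
          refine ⟨i - b, j, ?_, by omega, rfl⟩
          have e : a * (i - b) + a * b = a * i := by
            rw [← Nat.mul_add, Nat.sub_add_cancel (le_of_not_gt hib)]
          omega
      · rintro (⟨rfl, rfl⟩ | ⟨u, v, huv, rfl, rfl⟩)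
        · exact hp₀
        · have e : a * (u + b) = a * u + a * b := by rw [Nat.mul_add]
          omega
    rw [hins]
    have hnotmem : (i₀, j₀) ∉ (fun p : ℕ × ℕ => (p.1 + b, p.2)) ''
        {p : ℕ × ℕ | a * p.1 + b * p.2 = n - a * b} := by
      rintro ⟨⟨u, v⟩, _, he⟩
      simp only [Prod.mk.injEq] at he
      omega
    have hinj : Function.Injective (fun p : ℕ × ℕ => (p.1 + b, p.2)) := by
      rintro ⟨u, v⟩ ⟨u', v'⟩ h
      simp only [Prod.mk.injEq] at h
      exact Prod.ext (by omega) h.2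
    rw [Set.ncard_insert_of_notMem hnotmem ((hfin _).image _),
      Set.ncard_image_of_injective _ hinj, if_pos ⟨i₀, j₀, hp₀.symm⟩, if_pos habn,
      Nat.add_comm]
  · rw [if_neg habn, add_zero]
    have hsmall : ∀ i j : ℕ, a * i + b * j = n → i < b := by
      intro i j h
      by_contra hbi
      have : a * b ≤ a * i := Nat.mul_le_mul_left a (by omega)
      omega
    by_cases hex : ∃ i j : ℕ, n = a * i + b * j
    · obtain ⟨i, j, hij⟩ := hex
      rw [if_pos ⟨i, j, hij⟩]
      have : {p : ℕ × ℕ | a * p.1 + b * p.2 = n} = {(i, j)} := by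
        apply Set.eq_singleton_iff_unique_mem.mpr
        refine ⟨hij.symm, ?_⟩
        rintro ⟨u, v⟩ h
        simp only [Set.mem_setOf_eq] at h
        obtain ⟨h1, h2⟩ := huniq u v i j (hsmall u v h) (hsmall i j hij.symm) h hij.symm
        simp [h1, h2]
      rw [this, Set.ncard_singleton]
    · rw [if_neg hex]
      have : {p : ℕ × ℕ | a * p.1 + b * p.2 = n} = ∅ := by
        ext ⟨i, j⟩
        simp only [Set.mem_setOf_eq, Set.mem_empty_iff_false, iff_false]
        intro h
        exact hex ⟨i, j, h.symm⟩
      rw [this, Set.ncard_empty]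
end

section
/- Let a, b be distinct relatively prime integers greater than 1, let F = ab - a - b, and let f_A(q) = Σ_{n ∉ S, n ≤ F} q^n and g_A(q) = Σ_{n ∈ S, n ≤ F} q^n, where S = {ai + bj : i,j ∈ ℕ}. Then g_A(q) = q^F · f_A(1/q), i.e., g_A is the reciprocal polynomial of f_A (of degree F). -/
open Polynomial
open scoped Classical

/-!
Sylvester's symmetry: for coprime `a, b > 0` and every integer `n`, exactly one of `n` and
`F - n` lies in `S = ℕa + ℕb`. If both did, `ab = a(i + i' + 1) + b(j + j' + 1)` would force
`b ∣ i + i' + 1`, which is too large; if neither did, write `n = ax + by` with `0 ≤ x < b`, so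
`y < 0` and `F - n = a(b - 1 - x) + b(-1 - y)` lies in `S`. Hence `n ↦ F - n` exchanges the
exponents of `g_A` and `f_A`, which is exactly what reflecting `f_A` in degree `F` does.
-/

theorem Polynomial.reflect_sum {R ι : Type*} [Semiring R] (N : ℕ) (s : Finset ι)
    (f : ι → R[X]) : reflect N (∑ i ∈ s, f i) = ∑ i ∈ s, reflect N (f i) :=
  map_sum (⟨⟨reflect N, reflect_zero⟩, fun f g => reflect_add f g N⟩ : R[X] →+ R[X]) f s

theorem Polynomial.sum_filter_X_pow_eq_reflect {R : Type*} [Semiring R] (N : ℕ) (P : ℕ → Prop)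
    [DecidablePred P] (hP : ∀ n ≤ N, P n ↔ ¬ P (N - n)) :
    ∑ n ∈ (Finset.range (N + 1)).filter P, (X : R[X]) ^ n =
      reflect N (∑ n ∈ (Finset.range (N + 1)).filter (fun n => ¬ P n), X ^ n) := by
  rw [Finset.sum_filter, Finset.sum_filter, reflect_sum, ← Finset.sum_range_reflect]
  refine Finset.sum_congr rfl fun n hn => ?_
  have hn : n ≤ N := Nat.lt_succ_iff.mp (Finset.mem_range.mp hn)
  rw [Nat.add_sub_cancel, apply_ite (reflect N), reflect_monomial, reflect_zero, revAt_le hn]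
  simp only [hP (N - n) (Nat.sub_le N n), Nat.sub_sub_self hn]

theorem Int.exists_eq_mul_add_mul_of_isCoprime_s15 {a b : ℤ} (hb : 0 < b) (hcop : IsCoprime a b)
    (n : ℤ) : ∃ x y : ℤ, 0 ≤ x ∧ x < b ∧ n = a * x + b * y := by
  obtain ⟨u, v, huv⟩ := hcop
  refine ⟨n * u % b, a * (n * u / b) + n * v, Int.emod_nonneg _ hb.ne',
    Int.emod_lt_of_pos _ hb, ?_⟩
  linear_combination (-n) * huv - a * Int.mul_ediv_add_emod (n * u) b

theorem AddSubmonoid.mem_closure_pair_int {a b n : ℤ} :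
    n ∈ closure {a, b} ↔ ∃ i j : ℤ, 0 ≤ i ∧ 0 ≤ j ∧ n = a * i + b * j := by
  rw [mem_closure_pair]
  constructor
  · rintro ⟨i, j, rfl⟩
    exact ⟨i, j, i.cast_nonneg, j.cast_nonneg, by simp only [nsmul_eq_mul]; ring⟩
  · rintro ⟨i, j, hi, hj, rfl⟩
    lift i to ℕ using hi
    lift j to ℕ using hj
    exact ⟨i, j, by simp only [nsmul_eq_mul]; ring⟩

theorem AddSubmonoid.natCast_mem_closure_pair_iff {a b n : ℕ} :
    (n : ℤ) ∈ closure {(a : ℤ), (b : ℤ)} ↔ ∃ i j : ℕ, n = a * i + b * j := by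
  simp only [mem_closure_pair, nsmul_eq_mul]
  norm_cast
  constructor <;> rintro ⟨i, j, h⟩ <;> exact ⟨i, j, by linarith⟩

theorem AddSubmonoid.mem_closure_pair_iff_sub_notMem {a b : ℤ} (ha : 0 < a) (hb : 0 < b)
    (hcop : IsCoprime a b) (n : ℤ) :
    n ∈ closure {a, b} ↔ a * b - a - b - n ∉ closure {a, b} := by
  simp only [mem_closure_pair_int]
  constructor
  · rintro ⟨i, j, hi, hj, rfl⟩ ⟨i', j', hi', hj', h⟩
    have hdvd : b ∣ i + i' + 1 :=
      hcop.symm.dvd_of_dvd_mul_left ⟨a - (j + j' + 1), by linear_combination -h⟩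
    have : b ≤ i + i' + 1 := Int.le_of_dvd (by omega) hdvd
    nlinarith
  · intro h
    obtain ⟨x, y, hx, hxb, rfl⟩ := Int.exists_eq_mul_add_mul_of_isCoprime_s15 hb hcop n
    rcases le_or_gt 0 y with hy | hy
    · exact ⟨x, y, hx, hy, rfl⟩
    · exact absurd ⟨b - 1 - x, -1 - y, by omega, by omega, by ring⟩ h

theorem stmt_15_general (a b : ℕ) (ha : 2 ≤ a) (hb : 2 ≤ b) (hcop : Nat.Coprime a b) :
    (∑ n ∈ (Finset.range (a * b - a - b + 1)).filter
        (fun n => ∃ i j : ℕ, n = a * i + b * j), (X : ℚ[X]) ^ n) =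
      Polynomial.reflect (a * b - a - b)
        (∑ n ∈ (Finset.range (a * b - a - b + 1)).filter
          (fun n => ¬ ∃ i j : ℕ, n = a * i + b * j), (X : ℚ[X]) ^ n) := by
  apply sum_filter_X_pow_eq_reflect
  intro n hn
  have hF : a + b ≤ a * b := by nlinarith
  have hcast : ((a * b - a - b - n : ℕ) : ℤ) = a * b - a - b - n := by omega
  rw [← AddSubmonoid.natCast_mem_closure_pair_iff, ← AddSubmonoid.natCast_mem_closure_pair_iff,
    hcast]
  exact AddSubmonoid.mem_closure_pair_iff_sub_notMem (by omega) (by omega)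
    (Nat.isCoprime_iff_coprime.mpr hcop) n

theorem stmt_15 (a b : ℕ) (ha : 2 ≤ a) (hb : 2 ≤ b) (hab : a ≠ b) (hcop : Nat.Coprime a b) :
    (∑ n ∈ (Finset.range (a * b - a - b + 1)).filter
        (fun n => ∃ i j : ℕ, n = a * i + b * j), (X : ℚ[X]) ^ n) =
      Polynomial.reflect (a * b - a - b)
        (∑ n ∈ (Finset.range (a * b - a - b + 1)).filter
          (fun n => ¬ ∃ i j : ℕ, n = a * i + b * j), (X : ℚ[X]) ^ n) :=
  stmt_15_general a b ha hb hcop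
end

section
/- Let a and b be relatively prime positive integers, let E be a field, and let R = E[t^a, t^b] be the subalgebra of E[t] generated by t^a and t^b. Then the set of monomials {t^n : n ∈ S}, where S = {ai + bj : i, j ∈ ℕ}, is a basis of R as an E-vector space. -/
open Polynomial

theorem stmt_17 (a b : ℕ) (ha : 0 < a) (hb : 0 < b) (hcop : Nat.Coprime a b)
    (E : Type*) [Field E] :
    LinearIndependent E
        (fun n : {n : ℕ // ∃ i j : ℕ, n = a * i + b * j} => ((X : E[X]) ^ (n : ℕ))) ∧
      Subalgebra.toSubmodule (Algebra.adjoin E {(X : E[X]) ^ a, (X : E[X]) ^ b}) =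
        Submodule.span E {p : E[X] | ∃ n : ℕ, (∃ i j : ℕ, n = a * i + b * j) ∧ p = X ^ n} := by
  constructor
  · have h := ((Polynomial.basisMonomials E).linearIndependent.comp
      (fun n : {n : ℕ // ∃ i j : ℕ, n = a * i + b * j} => (n : ℕ)) Subtype.val_injective)
    convert h using 1
    funext n
    simp [Polynomial.X_pow_eq_monomial]
  · rw [Algebra.adjoin_eq_span]
    congr 1
    ext p
    constructor
    · intro hp
      induction hp using Submonoid.closure_induction with
      | mem x hx =>
        rcases hx with h | h
        · exact ⟨a, ⟨1, 0, by ring⟩, h⟩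
        · exact ⟨b, ⟨0, 1, by ring⟩, h⟩
      | one => exact ⟨0, ⟨0, 0, by ring⟩, by simp⟩
      | mul x y _ _ hx hy =>
        obtain ⟨n, ⟨i, j, hij⟩, rfl⟩ := hx
        obtain ⟨m, ⟨i', j', hij'⟩, rfl⟩ := hy
        exact ⟨n + m, ⟨i + i', j + j', by subst hij hij'; ring⟩, by rw [pow_add]⟩
    · rintro ⟨n, ⟨i, j, rfl⟩, rfl⟩
      have : (X : E[X]) ^ (a * i + b * j) = ((X : E[X]) ^ a) ^ i * ((X : E[X]) ^ b) ^ j := by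
        rw [← pow_mul, ← pow_mul, ← pow_add]
      rw [this]
      exact mul_mem (pow_mem (Submonoid.subset_closure (by left; rfl)) i)
        (pow_mem (Submonoid.subset_closure (by right; rfl)) j)
end

section
/- Let a, b be distinct relatively prime integers greater than 1 and let S = {ai + bj : i, j ∈ ℕ}. Then as formal power series over ℚ, Σ_{n ∈ S} q^n = 1/(1-q) - f_A(q), and moreover 1/((1-q^a)(1-q^b)) = 1/(1-q) - f_A(q) + q^{ab}/((1-q^a)(1-q^b)), where f_A(q) = Σ_{n ∉ S} q^n. -/
/-!
Since `a` and `b` are coprime, the numerical semigroup `S = ⟨a, b⟩` is the disjoint union of its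
Apéry set `{0, a, …, (b - 1) a}` and `b + S`. In power series this reads
`S(q) (1 - q^b) = ∑_{i < b} q^{a i}`, and multiplying by `1 - q^a` gives
`S(q) (1 - q^a) (1 - q^b) = 1 - q^{a b}`. Both identities follow, because `S(q) + f_A(q) = 1 / (1 - q)`.
-/

open PowerSeries
open scoped Classical

def numSemigroup (a b : ℕ) : Set ℕ := {n | ∃ i j : ℕ, n = a * i + b * j}

-- For coprime `a` and `b` this is the Apéry set of `b` in `⟨a, b⟩`: the `s ∈ ⟨a, b⟩` with `s - b ∉ ⟨a, b⟩`.
def apery (a b : ℕ) : Finset ℕ := (Finset.range b).image (a * ·)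

noncomputable def numSemigroupSeries (R : Type*) [Semiring R] (a b : ℕ) : R⟦X⟧ :=
  mk fun n => if ∃ i j : ℕ, n = a * i + b * j then 1 else 0

theorem mk_ite_eq_inv_one_sub_X_sub {K : Type*} [Field K] (p : ℕ → Prop) :
    mk (fun n => if p n then (1 : K) else 0) = (1 - X)⁻¹ - mk fun n => if p n then 0 else 1 := by
  rw [(inv_eq_iff_mul_eq_one (by simp)).2 (mk_one_mul_one_sub_eq_one K)]
  ext n
  by_cases h : p n <;> simp [h]

theorem coeff_sum_X_pow {R : Type*} [Semiring R] (s : Finset ℕ) (n : ℕ) :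
    coeff n (∑ m ∈ s, (X : R⟦X⟧) ^ m) = if n ∈ s then 1 else 0 := by
  simp [coeff_X_pow]

section
variable {a b n : ℕ}

theorem mem_numSemigroup_iff (ha : a ≠ 0) :
    n ∈ numSemigroup a b ↔ n ∈ apery a b ∨ (b ≤ n ∧ n - b ∈ numSemigroup a b) := by
  constructor
  · rintro ⟨i, j, rfl⟩
    rcases j with _ | j
    · by_cases hi : i < b
      · exact Or.inl (Finset.mem_image.2 ⟨i, Finset.mem_range.2 hi, by simp⟩)
      · obtain ⟨k, rfl⟩ := Nat.exists_eq_add_of_le (not_lt.1 hi)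
        obtain ⟨c, rfl⟩ := Nat.exists_eq_add_one_of_ne_zero ha
        exact Or.inr ⟨by nlinarith, k, c, Nat.sub_eq_of_eq_add (by ring)⟩
    · exact Or.inr ⟨by nlinarith, i, j, by rw [mul_add]; omega⟩
  · rintro (h | ⟨hbn, i, j, hij⟩)
    · obtain ⟨i, -, rfl⟩ := Finset.mem_image.1 h
      exact ⟨i, 0, by simp⟩
    · exact ⟨i, j + 1, by rw [mul_add]; omega⟩

theorem sub_notMem_numSemigroup_of_mem_apery (hcop : a.Coprime b) (hn : n ∈ apery a b)
    (hbn : b ≤ n) : n - b ∉ numSemigroup a b := by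
  obtain ⟨i, hi, rfl⟩ := Finset.mem_image.1 hn
  rw [Finset.mem_range] at hi
  rintro ⟨i', j, h⟩
  have hsplit : a * i = a * i' + b * (j + 1) := by rw [mul_add]; omega
  have ha : 0 < a := Nat.pos_of_ne_zero (by rintro rfl; omega)
  have hle : i' ≤ i := Nat.le_of_mul_le_mul_left (by omega) ha
  have hmod : i' ≡ i [MOD b] := by
    refine Nat.ModEq.cancel_left_of_coprime hcop.symm ?_
    rw [hsplit]
    exact (Nat.add_mul_mod_self_left _ _ _).symm
  obtain rfl := hmod.eq_of_lt_of_lt (by omega) hi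
  have : b * (j + 1) = 0 := by omega
  simp at this
  omega

theorem sum_apery_X_pow {R : Type*} [Semiring R] (ha : a ≠ 0) :
    ∑ m ∈ apery a b, (X : R⟦X⟧) ^ m = ∑ i ∈ Finset.range b, (X ^ a) ^ i := by
  rw [apery, Finset.sum_image fun _ _ _ _ h => mul_left_cancel₀ ha h]
  simp_rw [pow_mul]

variable (R : Type*) [CommRing R]

theorem numSemigroupSeries_mul_one_sub_X_pow (ha : a ≠ 0) (hcop : a.Coprime b) :
    numSemigroupSeries R a b * (1 - X ^ b) = ∑ m ∈ apery a b, X ^ m := by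
  ext n
  rw [mul_sub, mul_one, map_sub, coeff_mul_X_pow', coeff_sum_X_pow]
  have hmem := mem_numSemigroup_iff (b := b) (n := n) ha
  have hdisj := sub_notMem_numSemigroup_of_mem_apery (n := n) hcop
  simp only [numSemigroupSeries, coeff_mk]
  split_ifs <;> simp_all [numSemigroup]

theorem numSemigroupSeries_mul (ha : a ≠ 0) (hcop : a.Coprime b) :
    numSemigroupSeries R a b * ((1 - X ^ a) * (1 - X ^ b)) = 1 - X ^ (a * b) := by
  rw [mul_left_comm, numSemigroupSeries_mul_one_sub_X_pow R ha hcop, sum_apery_X_pow ha,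
    mul_comm, geom_sum_mul_neg, pow_mul]

end

theorem stmt_18_general (a b : ℕ) (ha : 2 ≤ a) (hb : 2 ≤ b) (hcop : Nat.Coprime a b) :
    (PowerSeries.mk fun n => if ∃ i j : ℕ, n = a * i + b * j then (1 : ℚ) else 0) =
        (1 - (X : ℚ⟦X⟧))⁻¹ -
          (PowerSeries.mk fun n => if ∃ i j : ℕ, n = a * i + b * j then (0 : ℚ) else 1) ∧
      ((1 - (X : ℚ⟦X⟧) ^ a) * (1 - X ^ b))⁻¹ =
        (1 - (X : ℚ⟦X⟧))⁻¹ -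
            (PowerSeries.mk fun n => if ∃ i j : ℕ, n = a * i + b * j then (0 : ℚ) else 1) +
          X ^ (a * b) * ((1 - (X : ℚ⟦X⟧) ^ a) * (1 - X ^ b))⁻¹ := by
  refine ⟨mk_ite_eq_inv_one_sub_X_sub _, ?_⟩
  rw [← mk_ite_eq_inv_one_sub_X_sub]
  have hu : constantCoeff ((1 - X ^ a) * (1 - X ^ b) : ℚ⟦X⟧) ≠ 0 := by
    simp [zero_pow (by omega : a ≠ 0), zero_pow (by omega : b ≠ 0)]
  have hS : numSemigroupSeries ℚ a b = (1 - X ^ (a * b)) * ((1 - X ^ a) * (1 - X ^ b))⁻¹ :=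
    (eq_mul_inv_iff_mul_eq hu).2 (numSemigroupSeries_mul ℚ (by omega) hcop)
  rw [numSemigroupSeries] at hS
  rw [hS]
  ring

theorem stmt_18 (a b : ℕ) (ha : 2 ≤ a) (hb : 2 ≤ b) (hab : a ≠ b) (hcop : Nat.Coprime a b) :
    (PowerSeries.mk fun n => if ∃ i j : ℕ, n = a * i + b * j then (1 : ℚ) else 0) =
        (1 - (X : ℚ⟦X⟧))⁻¹ -
          (PowerSeries.mk fun n => if ∃ i j : ℕ, n = a * i + b * j then (0 : ℚ) else 1) ∧
      ((1 - (X : ℚ⟦X⟧) ^ a) * (1 - X ^ b))⁻¹ =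
        (1 - (X : ℚ⟦X⟧))⁻¹ -
            (PowerSeries.mk fun n => if ∃ i j : ℕ, n = a * i + b * j then (0 : ℚ) else 1) +
          X ^ (a * b) * ((1 - (X : ℚ⟦X⟧) ^ a) * (1 - X ^ b))⁻¹ :=
  stmt_18_general a b ha hb hcop
end
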